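/- Let Γ be the path graph on ten vertexes v₁ — v₂ — ⋯ — v₁₀ with vertex weights (f(v₁),…,f(v₁₀)) = (2,2,2,2,4,4,2,2,2,2) and consecutive edge weights (g(v₁v₂),…,g(v₉v₁₀)) = (1,1,1,1,4,1,1,1,1). Fix λ = 1/2 and the ∞-deviation energy σ_∞. Then: (a) D₂ = {{v₁,…,v₅},{v₆,…,v₁₀}} is the unique minimal 2-partition of F_{1/2,∞}, with energy 2, while every other 2-partition has energy at least 5/2; (b) every 4-partition that is a 2-refining of D₂ has F_{1/2,∞}-energy at least 3, whereas the 4-partition C₄ = {{v₁,v₂},{v₃,v₄},{v₅,v₆},{v₇,v₈,v₉,v₁₀}} has F_{1/2,∞}-energy 5/2; hence no minimal 4-partition of F_{1/2,∞} is a 2-refining of the unique minimal 2-partition D₂. -/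

import Mathlib

open Finset

namespace Districting

variable {V : Type*} [Fintype V] [DecidableEq V]

/-- An `N`-partition of a graph `G`: a family of `N` pairwise disjoint sets of
vertexes covering all of `V`, each inducing a connected subgraph of `G`. -/
structure Partition (G : SimpleGraph V) (N : ℕ) where
  part : Fin N → Finset V
  disj : ∀ k l, k ≠ l → Disjoint (part k) (part l)
  covers : ∀ v : V, ∃ k, v ∈ part k
  connected : ∀ k, (G.induce (part k : Set V)).Connected

/-- The mass of a set of vertexes w.r.t. the vertex weight `f`. -/
def mass (f : V → ℝ) (s : Finset V) : ℝ := ∑ v ∈ s, f v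

/-- The total mass of the graph w.r.t. the vertex weight `f`. -/
def totalMass (f : V → ℝ) : ℝ := ∑ v : V, f v

open Classical in
/-- The cut (perimeter) energy of a partition: the sum of the weights of edges
whose endpoints lie in different parts. -/
noncomputable def cutEnergy (G : SimpleGraph V) (g : Sym2 V → ℝ) {N : ℕ}
    (P : Partition G N) : ℝ :=
  ∑ e : Sym2 V,
    if e ∈ G.edgeSet ∧ ∀ k, ¬ (∀ v ∈ e, v ∈ P.part k) then g e else 0

/-- The deviation energy of a partition: the standard deviation of the masses
from the mean mass. -/
noncomputable def deviation {G : SimpleGraph V} (f : V → ℝ) {N : ℕ}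
    (P : Partition G N) : ℝ :=
  Real.sqrt (∑ k : Fin N, (mass f (P.part k) - totalMass f / (N : ℝ)) ^ 2)

/-- The energy functional `F_λ`. -/
noncomputable def energy (G : SimpleGraph V) (f : V → ℝ) (g : Sym2 V → ℝ)
    (lam : ℝ) {N : ℕ} (P : Partition G N) : ℝ :=
  lam * cutEnergy G g P + (1 - lam) * deviation f P

end Districting

namespace Districting

/-- The `p`-deviation energy (`p`-th central moment) of a partition, `p ∈ [1,∞)`. -/
noncomputable def pDeviation {V : Type*} [Fintype V] [DecidableEq V]
    {G : SimpleGraph V} (f : V → ℝ) (p : ℝ) {N : ℕ} (P : Partition G N) : ℝ :=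
  (∑ k : Fin N, |mass f (P.part k) - totalMass f / (N : ℝ)| ^ p) ^ (1 / p)

/-- The `∞`-deviation energy of a partition. -/
noncomputable def infDeviation {V : Type*} [Fintype V] [DecidableEq V]
    {G : SimpleGraph V} (f : V → ℝ) {N : ℕ} (P : Partition G N) : ℝ :=
  ⨆ k : Fin N, |mass f (P.part k) - totalMass f / (N : ℝ)|

/-- The energy functional `F_{λ,p}` with `p`-deviation penalization. -/
noncomputable def energyP {V : Type*} [Fintype V] [DecidableEq V]
    (G : SimpleGraph V) (f : V → ℝ) (g : Sym2 V → ℝ)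
    (lam p : ℝ) {N : ℕ} (P : Partition G N) : ℝ :=
  lam * cutEnergy G g P + (1 - lam) * pDeviation f p P

/-- The energy functional `F_{λ,∞}` with `∞`-deviation penalization. -/
noncomputable def energyInf {V : Type*} [Fintype V] [DecidableEq V]
    (G : SimpleGraph V) (f : V → ℝ) (g : Sym2 V → ℝ)
    (lam : ℝ) {N : ℕ} (P : Partition G N) : ℝ :=
  lam * cutEnergy G g P + (1 - lam) * infDeviation f P

end Districting

namespace Districting

/-- `Q` is a `j`-refining of `P`: up to relabelling, `Q` splits each part of `P`
into exactly `j` parts. -/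
def IsRefining {V : Type*} [Fintype V] [DecidableEq V]
    {G : SimpleGraph V} {M N : ℕ} (j : ℕ)
    (Q : Partition G M) (P : Partition G N) : Prop :=
  ∃ φ : Fin M → Fin N,
    (∀ i, Q.part i ⊆ P.part (φ i)) ∧
      ∀ k, (Finset.univ.filter (fun i => φ i = k)).card = j

end Districting

namespace Districting

/-- The path graph `v₁ — v₂ — ⋯ — v₁₀` on `Fin 10` (with `vᵢ = i - 1`). -/
def pathGraph10 : SimpleGraph (Fin 10) :=
  SimpleGraph.fromRel (fun u v => (v : ℕ) = (u : ℕ) + 1)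

/-- The vertex partition of `D₂ = {{v₁,…,v₅},{v₆,…,v₁₀}}`. -/
def rangeD2 : Set (Finset (Fin 10)) :=
  {({0, 1, 2, 3, 4} : Finset (Fin 10)), ({5, 6, 7, 8, 9} : Finset (Fin 10))}

/-- The vertex partition of `C₄ = {{v₁,v₂},{v₃,v₄},{v₅,v₆},{v₇,v₈,v₉,v₁₀}}`. -/
def rangeC4 : Set (Finset (Fin 10)) :=
  {({0, 1} : Finset (Fin 10)), ({2, 3} : Finset (Fin 10)),
    ({4, 5} : Finset (Fin 10)), ({6, 7, 8, 9} : Finset (Fin 10))}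

end Districting

set_option linter.dupNamespace false
namespace Districting
open Finset

lemma adj_iff (a b : Fin 10) :
    pathGraph10.Adj a b ↔ a ≠ b ∧ ((b : ℕ) = a + 1 ∨ (a : ℕ) = b + 1) := by
  simp [pathGraph10, SimpleGraph.fromRel_adj]

instance : DecidableRel pathGraph10.Adj := fun a b =>
  decidable_of_iff _ (adj_iff a b).symm

example : DecidablePred (· ∈ pathGraph10.edgeSet) := by infer_instance

lemma mem_of_walk (s : Finset (Fin 10)) :
    ∀ (x y : ↑(s : Set (Fin 10))) (_ : (pathGraph10.induce (s : Set (Fin 10))).Walk x y)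
      (b : Fin 10), ((x : Fin 10) ≤ b ∧ b ≤ (y : Fin 10) ∨ (y : Fin 10) ≤ b ∧ b ≤ (x : Fin 10)) →
      b ∈ s := by
  intro x y w
  induction w with
  | nil =>
    rintro b (⟨h1, h2⟩ | ⟨h1, h2⟩) <;>
      exact (le_antisymm h2 h1 : b = _) ▸ Subtype.prop _
  | @cons x x' y h w ih =>
    intro b hb
    have hadj : pathGraph10.Adj (x : Fin 10) (x' : Fin 10) := h
    rw [adj_iff] at hadj
    by_cases hbx : b = (x : Fin 10)
    · subst hbx; exact x.2
    · apply ih b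
      have hx' := hadj.2
      have hne : (b : ℕ) ≠ ((x : Fin 10) : ℕ) := fun hc => hbx (Fin.ext hc)
      rcases hb with ⟨h1, h2⟩ | ⟨h1, h2⟩ <;> rw [Fin.le_def] at * <;> omega

lemma convex_of_connected (s : Finset (Fin 10))
    (h : (pathGraph10.induce (s : Set (Fin 10))).Connected) :
    ∀ a b c : Fin 10, a ∈ s → c ∈ s → a ≤ b → b ≤ c → b ∈ s := by
  intro a b c ha hc hab hbc
  obtain ⟨w⟩ := h.preconnected ⟨a, ha⟩ ⟨c, hc⟩
  exact mem_of_walk s _ _ w b (Or.inl ⟨hab, hbc⟩)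

lemma connected_of_convex (s : Finset (Fin 10)) (hne : s.Nonempty)
    (hc : ∀ a b c : Fin 10, a ∈ s → c ∈ s → a ≤ b → b ≤ c → b ∈ s) :
    (pathGraph10.induce (s : Set (Fin 10))).Connected := by
  have key : ∀ n : ℕ, ∀ x y : ↑(s : Set (Fin 10)), ((y : Fin 10) : ℕ) = ((x : Fin 10) : ℕ) + n →
      (pathGraph10.induce (s : Set (Fin 10))).Reachable x y := by
    intro n
    induction n with
    | zero => intro x y hxy; exact (by ext; omega : x = y) ▸ SimpleGraph.Reachable.refl x
    | succ n ih =>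
      intro x y hxy
      have hlt : ((x : Fin 10) : ℕ) + 1 ≤ 9 := by omega
      set x' : Fin 10 := ⟨((x : Fin 10) : ℕ) + 1, by omega⟩ with hx'
      have hx's : x' ∈ s := by
        have hval : (x' : ℕ) = ((x : Fin 10) : ℕ) + 1 := rfl
        apply hc (x : Fin 10) x' (y : Fin 10) x.2 y.2 <;> rw [Fin.le_def] <;> omega
      have hadjF : pathGraph10.Adj (x : Fin 10) x' := by
        rw [adj_iff]
        refine ⟨fun hcon => ?_, Or.inl (by simp [hx'])⟩
        have := congrArg Fin.val hcon; simp [hx'] at this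
      have hadj : (pathGraph10.induce (s : Set (Fin 10))).Adj x ⟨x', hx's⟩ := hadjF
      refine (hadj.reachable).trans (ih ⟨x', hx's⟩ y ?_)
      show ((y : Fin 10) : ℕ) = (x' : ℕ) + n
      simp [hx']; omega
  rw [SimpleGraph.connected_iff]
  refine ⟨fun x y => ?_, ?_⟩
  · rcases le_or_gt ((x : Fin 10) : ℕ) ((y : Fin 10) : ℕ) with hle | hlt
    · exact key (((y : Fin 10) : ℕ) - ((x : Fin 10) : ℕ)) x y (by omega)
    · exact (key (((x : Fin 10) : ℕ) - ((y : Fin 10) : ℕ)) y x (by omega)).symm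
  · obtain ⟨v, hv⟩ := hne
    exact ⟨⟨v, hv⟩⟩

end Districting
namespace Districting
open Finset

lemma range_two {α : Type*} (p : Fin 2 → α) : Set.range p = {p 0, p 1} := by
  ext t; simp [Fin.exists_fin_two, eq_comm]

lemma range_four {α : Type*} (p : Fin 4 → α) : Set.range p = {p 0, p 1, p 2, p 3} := by
  ext t
  constructor
  · rintro ⟨k, rfl⟩; fin_cases k <;> simp
  · rintro (rfl | rfl | rfl | rfl)
    exacts [⟨0, rfl⟩, ⟨1, rfl⟩, ⟨2, rfl⟩, ⟨3, rfl⟩]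

open Classical in
lemma cutEnergy_range (g : Sym2 (Fin 10) → ℝ) {N : ℕ} (P : Partition pathGraph10 N) :
    cutEnergy pathGraph10 g P = ∑ e : Sym2 (Fin 10),
      if (e ∈ pathGraph10.edgeSet ∧ ∀ s ∈ Set.range P.part, ¬ ∀ v ∈ e, v ∈ s) then g e else 0 := by
  refine Finset.sum_congr rfl fun e _ => ?_
  by_cases h : e ∈ pathGraph10.edgeSet ∧ ∀ k, ¬ (∀ v ∈ e, v ∈ P.part k)
  · rw [if_pos h, if_pos ⟨h.1, Set.forall_mem_range.mpr h.2⟩]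
  · rw [if_neg h, if_neg (fun hc => h ⟨hc.1, fun k => hc.2 (P.part k) ⟨k, rfl⟩⟩)]

lemma infDeviation_range (f : Fin 10 → ℝ) {N : ℕ} (P : Partition pathGraph10 N) :
    infDeviation f P =
      sSup ((fun s => |mass f s - totalMass f / (N : ℝ)|) '' Set.range P.part) := by
  rw [infDeviation, iSup, ← Set.range_comp]
  rfl

lemma csSup_four (a b c d : ℝ) : sSup {a, b, c, d} = max a (max b (max c d)) := by
  have h1 : ({c, d} : Set ℝ).Nonempty := ⟨c, by simp⟩
  have h2 : ({b, c, d} : Set ℝ).Nonempty := ⟨b, by simp⟩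
  rw [show ({a,b,c,d} : Set ℝ) = insert a (insert b {c,d}) from rfl,
    csSup_insert ((Set.toFinite _).bddAbove) h2,
    csSup_insert ((Set.toFinite _).bddAbove) h1,
    csSup_pair]

open Classical in
lemma cut_lower {N : ℕ} (g : Sym2 (Fin 10) → ℝ)
    (hgnn : ∀ e ∈ pathGraph10.edgeSet, 0 ≤ g e)
    (P : Partition pathGraph10 N) (E : Finset (Sym2 (Fin 10)))
    (hE : ∀ e ∈ E, e ∈ pathGraph10.edgeSet ∧ ∀ k, ¬ (∀ v ∈ e, v ∈ P.part k)) :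
    ∑ e ∈ E, g e ≤ cutEnergy pathGraph10 g P := by
  rw [cutEnergy]
  refine le_trans ?_ (Finset.sum_le_sum_of_subset_of_nonneg (Finset.subset_univ E)
    fun e _ _ => ?_)
  · refine le_of_eq (Finset.sum_congr rfl fun e he => ?_)
    rw [if_pos (hE e he)]
  · split
    · next h => exact hgnn e h.1
    · exact le_rfl

lemma infDeviation_nonneg (f : Fin 10 → ℝ) {N : ℕ} [NeZero N] (P : Partition pathGraph10 N) :
    0 ≤ infDeviation f P := by
  have := le_ciSup (f := fun k : Fin N => |mass f (P.part k) - totalMass f / (N : ℝ)|)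
    (Set.Finite.bddAbove (Set.finite_range _)) 0
  exact le_trans (abs_nonneg _) this

end Districting
namespace Districting
open Finset

lemma part_nonempty {N : ℕ} (P : Partition pathGraph10 N) (k : Fin N) :
    (P.part k).Nonempty := by
  obtain ⟨⟨v, hv⟩⟩ := (P.connected k).nonempty
  exact ⟨v, hv⟩

lemma compl_part (P : Partition pathGraph10 2) (i j : Fin 2) (hj : j ≠ i) :
    P.part j = (P.part i)ᶜ := by
  ext v
  simp only [Finset.mem_compl]
  constructor
  · intro hv hvi
    exact (Finset.disjoint_left.mp (P.disj j i hj) hv) hvi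
  · intro hv
    obtain ⟨k, hk⟩ := P.covers v
    have hki : k ≠ i := fun h => hv (h ▸ hk)
    have : k = j := by fin_cases k <;> fin_cases j <;> fin_cases i <;> simp_all
    exact this ▸ hk

lemma two_structure (P : Partition pathGraph10 2) :
    ∃ M : Fin 10, (M : ℕ) < 9 ∧
      Set.range P.part = {Finset.Iic M, (Finset.Iic M)ᶜ} := by
  obtain ⟨i, h0⟩ := P.covers 0
  have hconv := convex_of_connected _ (P.connected i)
  have hne := part_nonempty P i
  set M := (P.part i).max' hne with hM
  have hMmem : M ∈ P.part i := Finset.max'_mem _ _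
  have hs : P.part i = Finset.Iic M := by
    ext v
    constructor
    · intro hv; exact Finset.mem_Iic.mpr (Finset.le_max' _ _ hv)
    · intro hv; exact hconv 0 v M h0 hMmem (Fin.zero_le v) (Finset.mem_Iic.mp hv)
  have hj : ∀ j, j ≠ i → P.part j = (Finset.Iic M)ᶜ := fun j hji => by
    rw [compl_part P i j hji, hs]
  have hlt : (M : ℕ) < 9 := by
    have hi1 : (1 - i : Fin 2) ≠ i := by fin_cases i <;> decide
    obtain ⟨v, hv⟩ := part_nonempty P (1 - i)
    rw [hj _ hi1, Finset.mem_compl, Finset.mem_Iic] at hv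
    have := v.isLt
    rw [Fin.le_def] at hv
    omega
  refine ⟨M, hlt, ?_⟩
  rw [range_two]
  have hi : i = 0 ∨ i = 1 := by fin_cases i <;> simp
  rcases hi with rfl | rfl
  · rw [hs, hj 1 (by decide)]
  · rw [hs, hj 0 (by decide), Set.pair_comm]

lemma cond_iff_range {N : ℕ} (P : Partition pathGraph10 N) (R : Set (Finset (Fin 10)))
    (hr : Set.range P.part = R) (e : Sym2 (Fin 10)) :
    (∀ k, ¬ (∀ v ∈ e, v ∈ P.part k)) ↔ ∀ s ∈ R, ¬ (∀ v ∈ e, v ∈ s) := by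
  rw [← hr]
  constructor
  · rintro h s ⟨k, rfl⟩; exact h k
  · intro h k; exact h _ ⟨k, rfl⟩

open Classical in
lemma cutEnergy_eq_sum (g : Sym2 (Fin 10) → ℝ) {N : ℕ} (P : Partition pathGraph10 N)
    (E : Finset (Sym2 (Fin 10)))
    (hiff : ∀ e : Sym2 (Fin 10),
      (e ∈ pathGraph10.edgeSet ∧ ∀ k, ¬ (∀ v ∈ e, v ∈ P.part k)) ↔ e ∈ E) :
    cutEnergy pathGraph10 g P = ∑ e ∈ E, g e := by
  rw [cutEnergy, ← Finset.univ_inter E, ← Finset.sum_ite_mem]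
  refine Finset.sum_congr rfl fun e _ => ?_
  by_cases h : e ∈ E
  · rw [if_pos h, if_pos ((hiff e).mpr h)]
  · rw [if_neg h, if_neg (fun hc => h ((hiff e).mp hc))]

lemma infDeviation_two (f : Fin 10 → ℝ) (P : Partition pathGraph10 2)
    (s t : Finset (Fin 10)) (hr : Set.range P.part = {s, t}) :
    infDeviation f P =
      max |mass f s - totalMass f / 2| |mass f t - totalMass f / 2| := by
  rw [infDeviation_range, hr, Set.image_insert_eq, Set.image_singleton]
  norm_num [csSup_pair]

lemma infDeviation_four (f : Fin 10 → ℝ) (P : Partition pathGraph10 4)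
    (s t u w : Finset (Fin 10)) (hr : Set.range P.part = {s, t, u, w}) :
    infDeviation f P =
      max |mass f s - totalMass f / 4| (max |mass f t - totalMass f / 4|
        (max |mass f u - totalMass f / 4| |mass f w - totalMass f / 4|)) := by
  rw [infDeviation_range, hr, Set.image_insert_eq, Set.image_insert_eq,
    Set.image_insert_eq, Set.image_singleton]
  norm_num [csSup_four]

end Districting
namespace Districting
open Finset

lemma energy_two_eval (f : Fin 10 → ℝ) (g : Sym2 (Fin 10) → ℝ) (P : Partition pathGraph10 2)
    (s t : Finset (Fin 10)) (a b : Fin 10)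
    (hr : Set.range P.part = {s, t})
    (hpair : ∀ u v : Fin 10,
      (pathGraph10.Adj u v ∧ ¬(u ∈ s ∧ v ∈ s) ∧ ¬(u ∈ t ∧ v ∈ t)) ↔
        ((u = a ∧ v = b) ∨ (u = b ∧ v = a))) :
    energyInf pathGraph10 f g (1/2) P =
      1/2 * g s(a, b) + 1/2 * max |mass f s - totalMass f / 2| |mass f t - totalMass f / 2| := by
  rw [energyInf, infDeviation_two f P s t hr,
    cutEnergy_eq_sum g P {s(a,b)} ?_, Finset.sum_singleton]
  · norm_num
  · intro e
    induction e using Sym2.ind with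
    | _ u v =>
      rw [cond_iff_range P {s, t} hr]
      simp only [SimpleGraph.mem_edgeSet, Set.mem_insert_iff, Set.mem_singleton_iff,
        Sym2.mem_iff, forall_eq_or_imp, forall_eq, Finset.mem_singleton, Sym2.eq_iff]
      have := hpair u v
      tauto

lemma energy_four_eval (f : Fin 10 → ℝ) (g : Sym2 (Fin 10) → ℝ) (Q : Partition pathGraph10 4)
    (s t u w : Finset (Fin 10)) (E : Finset (Sym2 (Fin 10)))
    (hr : Set.range Q.part = {s, t, u, w})
    (hpair : ∀ x y : Fin 10,
      (pathGraph10.Adj x y ∧ ¬(x ∈ s ∧ y ∈ s) ∧ ¬(x ∈ t ∧ y ∈ t) ∧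
        ¬(x ∈ u ∧ y ∈ u) ∧ ¬(x ∈ w ∧ y ∈ w)) ↔ s(x, y) ∈ E) :
    energyInf pathGraph10 f g (1/2) Q =
      1/2 * (∑ e ∈ E, g e) + 1/2 * max |mass f s - totalMass f / 4|
        (max |mass f t - totalMass f / 4|
          (max |mass f u - totalMass f / 4| |mass f w - totalMass f / 4|)) := by
  rw [energyInf, infDeviation_four f Q s t u w hr, cutEnergy_eq_sum g Q E ?_]
  · norm_num
  · intro e
    induction e using Sym2.ind with
    | _ x y =>
      rw [cond_iff_range Q {s, t, u, w} hr]
      simp only [SimpleGraph.mem_edgeSet, Set.mem_insert_iff, Set.mem_singleton_iff,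
        Sym2.mem_iff, forall_eq_or_imp, forall_eq]
      have := hpair x y
      tauto

def mkTwo (s t : Finset (Fin 10)) (hd : Disjoint s t) (hu : ∀ v, v ∈ s ∨ v ∈ t)
    (hcs : (pathGraph10.induce (s : Set (Fin 10))).Connected)
    (hct : (pathGraph10.induce (t : Set (Fin 10))).Connected) : Partition pathGraph10 2 where
  part := ![s, t]
  disj := by
    intro k l hkl
    fin_cases k <;> fin_cases l <;>
      first
        | exact absurd rfl hkl
        | exact hd
        | exact hd.symm
  covers := fun v => by rcases hu v with h | h; exacts [⟨0, h⟩, ⟨1, h⟩]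
  connected := by
    intro k
    fin_cases k
    · exact hcs
    · exact hct

lemma range_mkTwo (s t : Finset (Fin 10)) (hd : Disjoint s t) (hu : ∀ v, v ∈ s ∨ v ∈ t)
    (hcs : (pathGraph10.induce (s : Set (Fin 10))).Connected)
    (hct : (pathGraph10.induce (t : Set (Fin 10))).Connected) :
    Set.range (mkTwo s t hd hu hcs hct).part = {s, t} := by
  rw [range_two]; rfl

def mkFour (s t u w : Finset (Fin 10)) (h12 : Disjoint s t) (h13 : Disjoint s u)
    (h14 : Disjoint s w) (h23 : Disjoint t u) (h24 : Disjoint t w) (h34 : Disjoint u w)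
    (hu : ∀ v, v ∈ s ∨ v ∈ t ∨ v ∈ u ∨ v ∈ w)
    (hc1 : (pathGraph10.induce (s : Set (Fin 10))).Connected)
    (hc2 : (pathGraph10.induce (t : Set (Fin 10))).Connected)
    (hc3 : (pathGraph10.induce (u : Set (Fin 10))).Connected)
    (hc4 : (pathGraph10.induce (w : Set (Fin 10))).Connected) : Partition pathGraph10 4 where
  part := ![s, t, u, w]
  disj := by
    intro k l hkl
    fin_cases k <;> fin_cases l <;>
      first
        | exact absurd rfl hkl
        | exact h12 | exact h12.symm
        | exact h13 | exact h13.symm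
        | exact h14 | exact h14.symm
        | exact h23 | exact h23.symm
        | exact h24 | exact h24.symm
        | exact h34 | exact h34.symm
  covers := fun v => by
    rcases hu v with h | h | h | h
    exacts [⟨0, h⟩, ⟨1, h⟩, ⟨2, h⟩, ⟨3, h⟩]
  connected := by
    intro k
    fin_cases k
    · exact hc1
    · exact hc2
    · exact hc3
    · exact hc4

lemma range_mkFour (s t u w : Finset (Fin 10)) (h12 : Disjoint s t) (h13 : Disjoint s u)
    (h14 : Disjoint s w) (h23 : Disjoint t u) (h24 : Disjoint t w) (h34 : Disjoint u w)
    (hu : ∀ v, v ∈ s ∨ v ∈ t ∨ v ∈ u ∨ v ∈ w)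
    (hc1 : (pathGraph10.induce (s : Set (Fin 10))).Connected)
    (hc2 : (pathGraph10.induce (t : Set (Fin 10))).Connected)
    (hc3 : (pathGraph10.induce (u : Set (Fin 10))).Connected)
    (hc4 : (pathGraph10.induce (w : Set (Fin 10))).Connected) :
    Set.range (mkFour s t u w h12 h13 h14 h23 h24 h34 hu hc1 hc2 hc3 hc4).part = {s, t, u, w} := by
  rw [range_four]; rfl

end Districting
namespace Districting
open Finset

lemma refining_bound (f : Fin 10 → ℝ) (g : Sym2 (Fin 10) → ℝ)
    (hg₄₅ : g s(4, 5) = 4)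
    (hg : ∀ e ∈ pathGraph10.edgeSet, e ≠ s(4, 5) → g e = 1)
    (Q : Partition pathGraph10 4) (P : Partition pathGraph10 2)
    (hP : Set.range P.part = rangeD2) (href : IsRefining 2 Q P) :
    3 ≤ energyInf pathGraph10 f g (1/2) Q := by
  obtain ⟨φ, hsub, hcard⟩ := href
  have h4v : ((4 : Fin 10) : ℕ) = 4 := rfl
  have h5v : ((5 : Fin 10) : ℕ) = 5 := rfl
  have h9v : ((9 : Fin 10) : ℕ) = 9 := rfl
  have hgnn : ∀ e ∈ pathGraph10.edgeSet, 0 ≤ g e := by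
    intro e he
    by_cases h : e = s(4, 5)
    · rw [h, hg₄₅]; norm_num
    · rw [hg e he h]; norm_num
  have hPk : ∀ k, P.part k = ({0,1,2,3,4} : Finset (Fin 10)) ∨
      P.part k = ({5,6,7,8,9} : Finset (Fin 10)) := by
    intro k
    have hmem : P.part k ∈ rangeD2 := hP ▸ Set.mem_range_self k
    simpa [rangeD2] using hmem
  have hsib : ∀ i : Fin 4, ∃ i', i' ≠ i ∧ φ i' = φ i := by
    intro i
    by_contra h
    push_neg at h
    have hsubs : Finset.univ.filter (fun x => φ x = φ i) ⊆ {i} := by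
      intro x hx
      simp only [Finset.mem_filter] at hx
      simp only [Finset.mem_singleton]
      by_contra hne
      exact h x hne hx.2
    have hle := Finset.card_le_card hsubs
    rw [hcard (φ i), Finset.card_singleton] at hle
    omega
  -- left part containing 0
  obtain ⟨i0, hi0⟩ := Q.covers 0
  have hL : P.part (φ i0) = ({0,1,2,3,4} : Finset (Fin 10)) := by
    rcases hPk (φ i0) with h | h
    · exact h
    · have hx := hsub i0 hi0; rw [h] at hx; exact absurd hx (by decide)
  have hconv0 := convex_of_connected _ (Q.connected i0)
  have hne0 := part_nonempty Q i0
  set m : Fin 10 := (Q.part i0).max' hne0 with hmdef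
  have hmmem : m ∈ Q.part i0 := Finset.max'_mem _ _
  have hIic : Q.part i0 = Finset.Iic m := by
    ext v
    constructor
    · intro hv; exact Finset.mem_Iic.mpr (Finset.le_max' _ _ hv)
    · intro hv; exact hconv0 0 v m hi0 hmmem (Fin.zero_le v) (Finset.mem_Iic.mp hv)
  have hm4 : (m : ℕ) < 4 := by
    obtain ⟨i1, hne1, hφ1⟩ := hsib i0
    obtain ⟨v, hv⟩ := part_nonempty Q i1
    have hvL : v ∈ ({0,1,2,3,4} : Finset (Fin 10)) := by
      have hx := hsub i1 hv; rwa [hφ1, hL] at hx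
    have hvm : v ∉ Q.part i0 :=
      fun hc => (Finset.disjoint_left.mp (Q.disj i1 i0 hne1) hv) hc
    rw [hIic, Finset.mem_Iic, Fin.le_def, not_le] at hvm
    have hv4 : (v : ℕ) ≤ 4 := by
      have hd : ∀ x : Fin 10, x ∈ ({0,1,2,3,4} : Finset (Fin 10)) → (x : ℕ) ≤ 4 := by decide
      exact hd v hvL
    omega
  have hmlt : (m : ℕ) < 9 := by omega
  set m1 : Fin 10 := ⟨(m : ℕ) + 1, by omega⟩ with hm1def
  have hval1 : (m1 : ℕ) = (m : ℕ) + 1 := rfl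
  have hcross1 : ∀ k, ¬ (m ∈ Q.part k ∧ m1 ∈ Q.part k) := by
    rintro k ⟨hmk, hm1k⟩
    have hk : k = i0 := by
      by_contra hne
      exact (Finset.disjoint_left.mp (Q.disj k i0 hne) hmk) hmmem
    subst hk
    rw [hIic, Finset.mem_Iic, Fin.le_def] at hm1k
    have hcon : (m : ℕ) + 1 ≤ (m : ℕ) := hm1k
    omega
  -- right part containing 9
  obtain ⟨i9, hi9⟩ := Q.covers 9
  have hR : P.part (φ i9) = ({5,6,7,8,9} : Finset (Fin 10)) := by
    rcases hPk (φ i9) with h | h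
    · have hx := hsub i9 hi9; rw [h] at hx; exact absurd hx (by decide)
    · exact h
  have hconv9 := convex_of_connected _ (Q.connected i9)
  have hne9 := part_nonempty Q i9
  set m' : Fin 10 := (Q.part i9).min' hne9 with hm'def
  have hm'mem : m' ∈ Q.part i9 := Finset.min'_mem _ _
  have hIci : Q.part i9 = Finset.Ici m' := by
    ext v
    constructor
    · intro hv; exact Finset.mem_Ici.mpr (Finset.min'_le _ _ hv)
    · intro hv
      refine hconv9 m' v 9 hm'mem hi9 (Finset.mem_Ici.mp hv) ?_
      rw [Fin.le_def, h9v]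
      have := v.isLt
      omega
  have hm6 : 6 ≤ (m' : ℕ) := by
    obtain ⟨i1, hne1, hφ1⟩ := hsib i9
    obtain ⟨v, hv⟩ := part_nonempty Q i1
    have hvR : v ∈ ({5,6,7,8,9} : Finset (Fin 10)) := by
      have hx := hsub i1 hv; rwa [hφ1, hR] at hx
    have hvm : v ∉ Q.part i9 :=
      fun hc => (Finset.disjoint_left.mp (Q.disj i1 i9 hne1) hv) hc
    rw [hIci, Finset.mem_Ici, Fin.le_def, not_le] at hvm
    have hv5 : 5 ≤ (v : ℕ) := by
      have hd : ∀ x : Fin 10, x ∈ ({5,6,7,8,9} : Finset (Fin 10)) → 5 ≤ (x : ℕ) := by decide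
      exact hd v hvR
    omega
  set m2 : Fin 10 := ⟨(m' : ℕ) - 1, by omega⟩ with hm2def
  have hval2 : (m2 : ℕ) = (m' : ℕ) - 1 := rfl
  have hcross2 : ∀ k, ¬ (m2 ∈ Q.part k ∧ m' ∈ Q.part k) := by
    rintro k ⟨hm2k, hm'k⟩
    have hk : k = i9 := by
      by_contra hne
      exact (Finset.disjoint_left.mp (Q.disj k i9 hne) hm'k) hm'mem
    subst hk
    rw [hIci, Finset.mem_Ici, Fin.le_def] at hm2k
    have hcon : (m' : ℕ) ≤ (m' : ℕ) - 1 := hm2k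
    omega
  have hcross45 : ∀ k, ¬ ((4 : Fin 10) ∈ Q.part k ∧ (5 : Fin 10) ∈ Q.part k) := by
    rintro k ⟨h4, h5⟩
    rcases hPk (φ k) with h | h
    · have hx := hsub k h5; rw [h] at hx; exact absurd hx (by decide)
    · have hx := hsub k h4; rw [h] at hx; exact absurd hx (by decide)
  -- the three cut edges
  have he1 : s(m, m1) ∈ pathGraph10.edgeSet := by
    rw [SimpleGraph.mem_edgeSet, adj_iff]
    refine ⟨fun h => ?_, Or.inl hval1⟩
    have := congrArg Fin.val h
    rw [hval1] at this
    omega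
  have he2 : s(m2, m') ∈ pathGraph10.edgeSet := by
    rw [SimpleGraph.mem_edgeSet, adj_iff]
    refine ⟨fun h => ?_, Or.inl (by rw [hval2]; omega)⟩
    have := congrArg Fin.val h
    rw [hval2] at this
    omega
  have he45 : s((4 : Fin 10), 5) ∈ pathGraph10.edgeSet := by
    rw [SimpleGraph.mem_edgeSet]; decide
  have hne145 : s(m, m1) ≠ s((4 : Fin 10), 5) := by
    intro hcon
    rw [Sym2.eq_iff] at hcon
    rcases hcon with (⟨h1, _⟩ | ⟨h1, _⟩)
    · have := congrArg Fin.val h1; rw [h4v] at this; omega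
    · have := congrArg Fin.val h1; rw [h5v] at this; omega
  have hne245 : s(m2, m') ≠ s((4 : Fin 10), 5) := by
    intro hcon
    rw [Sym2.eq_iff] at hcon
    rcases hcon with (⟨_, h2⟩ | ⟨_, h2⟩)
    · have := congrArg Fin.val h2; rw [h5v] at this; omega
    · have := congrArg Fin.val h2; rw [h4v] at this; omega
  have hne12 : s(m, m1) ≠ s(m2, m') := by
    intro hcon
    rw [Sym2.eq_iff] at hcon
    rcases hcon with (⟨_, h2⟩ | ⟨h1, _⟩)
    · have := congrArg Fin.val h2; rw [hval1] at this; omega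
    · have := congrArg Fin.val h1; omega
  set E : Finset (Sym2 (Fin 10)) := {s((4 : Fin 10), 5), s(m, m1), s(m2, m')} with hEdef
  have hE : ∀ e ∈ E, e ∈ pathGraph10.edgeSet ∧ ∀ k, ¬ (∀ v ∈ e, v ∈ Q.part k) := by
    intro e he
    rw [hEdef, Finset.mem_insert, Finset.mem_insert, Finset.mem_singleton] at he
    rcases he with rfl | rfl | rfl
    · exact ⟨he45, fun k hall =>
        hcross45 k ⟨hall 4 (Sym2.mem_mk_left _ _), hall 5 (Sym2.mem_mk_right _ _)⟩⟩
    · exact ⟨he1, fun k hall =>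
        hcross1 k ⟨hall m (Sym2.mem_mk_left _ _), hall m1 (Sym2.mem_mk_right _ _)⟩⟩
    · exact ⟨he2, fun k hall =>
        hcross2 k ⟨hall m2 (Sym2.mem_mk_left _ _), hall m' (Sym2.mem_mk_right _ _)⟩⟩
  have hsum : ∑ e ∈ E, g e = 6 := by
    rw [hEdef, Finset.sum_insert (by
        simp only [Finset.mem_insert, Finset.mem_singleton]
        push_neg
        exact ⟨Ne.symm hne145, Ne.symm hne245⟩),
      Finset.sum_insert (by rwa [Finset.mem_singleton]), Finset.sum_singleton,
      hg₄₅, hg _ he1 hne145, hg _ he2 hne245]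
    norm_num
  have hcut : (6 : ℝ) ≤ cutEnergy pathGraph10 g Q := hsum ▸ cut_lower g hgnn Q E hE
  have hdev : 0 ≤ infDeviation f Q := infDeviation_nonneg f Q
  rw [energyInf]
  norm_num
  linarith

end Districting
namespace Districting
open Finset

theorem path10_inf_norm_no_refining'
    (f : Fin 10 → ℝ) (hf₄ : f 4 = 4) (hf₅ : f 5 = 4)
    (hf : ∀ v : Fin 10, v ≠ 4 → v ≠ 5 → f v = 2)
    (g : Sym2 (Fin 10) → ℝ) (hg₄₅ : g s(4, 5) = 4)
    (hg : ∀ e ∈ pathGraph10.edgeSet, e ≠ s(4, 5) → g e = 1) :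
    ((∃ P : Partition pathGraph10 2, Set.range P.part = rangeD2) ∧
      (∀ P : Partition pathGraph10 2, Set.range P.part = rangeD2 →
        energyInf pathGraph10 f g (1 / 2) P = 2) ∧
      (∀ P : Partition pathGraph10 2, Set.range P.part ≠ rangeD2 →
        5 / 2 ≤ energyInf pathGraph10 f g (1 / 2) P) ∧
      (∀ P : Partition pathGraph10 2,
        (∀ Q : Partition pathGraph10 2,
            energyInf pathGraph10 f g (1 / 2) P
              ≤ energyInf pathGraph10 f g (1 / 2) Q) ↔
          Set.range P.part = rangeD2)) ∧
    ((∀ Q : Partition pathGraph10 4, ∀ P : Partition pathGraph10 2,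
        Set.range P.part = rangeD2 → IsRefining 2 Q P →
          3 ≤ energyInf pathGraph10 f g (1 / 2) Q) ∧
      (∃ Q : Partition pathGraph10 4, Set.range Q.part = rangeC4) ∧
      (∀ Q : Partition pathGraph10 4, Set.range Q.part = rangeC4 →
        energyInf pathGraph10 f g (1 / 2) Q = 5 / 2) ∧
      (∀ Q : Partition pathGraph10 4,
        (∀ R : Partition pathGraph10 4,
            energyInf pathGraph10 f g (1 / 2) Q
              ≤ energyInf pathGraph10 f g (1 / 2) R) →
          ∀ P : Partition pathGraph10 2, Set.range P.part = rangeD2 →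
            ¬ IsRefining 2 Q P)) := by
  have hmass : ∀ s : Finset (Fin 10), mass f s = 2 * s.card + 2 * (s ∩ {4, 5}).card := by
    intro s
    rw [mass]
    have hstep : ∀ v ∈ s, f v = 2 + (if v ∈ ({4, 5} : Finset (Fin 10)) then 2 else 0) := by
      intro v _
      by_cases h4 : v = 4
      · subst h4; rw [hf₄, if_pos (by decide)]; norm_num
      · by_cases h5 : v = 5
        · subst h5; rw [hf₅, if_pos (by decide)]; norm_num
        · rw [hf v h4 h5, if_neg (by simp [h4, h5]), add_zero]
    rw [Finset.sum_congr rfl hstep, Finset.sum_add_distrib, Finset.sum_const,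
      Finset.sum_ite_mem, Finset.sum_const]
    simp [nsmul_eq_mul]
    ring
  have hmassv : ∀ (s : Finset (Fin 10)) (n k : ℕ) (r : ℝ), s.card = n → (s ∩ {4,5}).card = k →
      2 * (n : ℝ) + 2 * (k : ℝ) = r → mass f s = r := by
    intro s n k r h1 h2 h3
    rw [hmass, h1, h2, h3]
  have htot : totalMass f = 24 := by
    have h0 : totalMass f = mass f Finset.univ := rfl
    rw [h0, hmassv Finset.univ 10 2 24 rfl rfl (by norm_num)]
  have hgval : ∀ a b : Fin 10, pathGraph10.Adj a b →
      ¬((a = 4 ∧ b = 5) ∨ (a = 5 ∧ b = 4)) → g s(a, b) = 1 := by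
    intro a b hadj hne
    refine hg _ (pathGraph10.mem_edgeSet.mpr hadj) fun hc => ?_
    rw [Sym2.eq_iff] at hc
    exact hne hc
  -- the partition D2
  let D2 : Partition pathGraph10 2 :=
    mkTwo {0,1,2,3,4} {5,6,7,8,9} (by rw [Finset.disjoint_left]; decide) (by decide)
      (connected_of_convex _ ⟨0, by decide⟩ (by decide))
      (connected_of_convex _ ⟨5, by decide⟩ (by decide))
  have hD2range : Set.range D2.part = rangeD2 := by
    rw [rangeD2]; exact range_mkTwo _ _ _ _ _ _
  -- energy of D2-shaped partitions
  have hE2 : ∀ P : Partition pathGraph10 2, Set.range P.part = rangeD2 →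
      energyInf pathGraph10 f g (1 / 2) P = 2 := by
    intro P hr
    rw [rangeD2] at hr
    rw [energy_two_eval f g P {0,1,2,3,4} {5,6,7,8,9} 4 5 hr (by decide), htot, hg₄₅,
      hmassv ({0,1,2,3,4} : Finset (Fin 10)) 5 1 12 rfl rfl (by norm_num),
      hmassv ({5,6,7,8,9} : Finset (Fin 10)) 5 1 12 rfl rfl (by norm_num)]
    rw [show |(12 : ℝ) - 24 / 2| = 0 from by rw [abs_of_nonneg] <;> norm_num, max_self]
    norm_num
  -- other 2-partitions have energy ≥ 5/2
  have hE2' : ∀ P : Partition pathGraph10 2, Set.range P.part ≠ rangeD2 →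
      5 / 2 ≤ energyInf pathGraph10 f g (1 / 2) P := by
    intro P hne
    obtain ⟨M, hM9, hr⟩ := two_structure P
    have heval : ∀ (s t : Finset (Fin 10)) (a b : Fin 10) (c d1 d2 : ℝ),
        Set.range P.part = {s, t} →
        (∀ u v : Fin 10, (pathGraph10.Adj u v ∧ ¬(u ∈ s ∧ v ∈ s) ∧ ¬(u ∈ t ∧ v ∈ t)) ↔
          ((u = a ∧ v = b) ∨ (u = b ∧ v = a))) →
        g s(a, b) = c → mass f s = d1 → mass f t = d2 →
        energyInf pathGraph10 f g (1 / 2) P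
          = 1 / 2 * c + 1 / 2 * max |d1 - 12| |d2 - 12| := by
      intro s t a b c d1 d2 hr' hp hgc h1 h2
      rw [energy_two_eval f g P s t a b hr' hp, htot, hgc, h1, h2]
      norm_num
    have hMc : (M : ℕ) = 0 ∨ (M : ℕ) = 1 ∨ (M : ℕ) = 2 ∨ (M : ℕ) = 3 ∨ (M : ℕ) = 4 ∨
        (M : ℕ) = 5 ∨ (M : ℕ) = 6 ∨ (M : ℕ) = 7 ∨ (M : ℕ) = 8 := by omega
    rcases hMc with h | h | h | h | h | h | h | h | h
    · -- M = 0
      have hM : M = (0 : Fin 10) := Fin.val_injective (by rw [h]; rfl)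
      subst hM
      rw [show (Finset.Iic (0 : Fin 10))ᶜ = ({1,2,3,4,5,6,7,8,9} : Finset (Fin 10)) from by decide,
        show Finset.Iic (0 : Fin 10) = ({0} : Finset (Fin 10)) from by decide] at hr
      rw [heval ({0} : Finset (Fin 10)) ({1,2,3,4,5,6,7,8,9} : Finset (Fin 10)) 0 1 1 2 22 hr
        (by decide) (hgval 0 1 (by decide) (by decide))
        (hmassv _ 1 0 2 rfl rfl (by norm_num))
        (hmassv _ 9 2 22 rfl rfl (by norm_num))]
      rw [show |(2 : ℝ) - 12| = 10 from by rw [abs_of_nonpos] <;> norm_num,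
        show |(22 : ℝ) - 12| = 10 from by rw [abs_of_nonneg] <;> norm_num, max_self]
      norm_num
    · -- M = 1
      have hM : M = (1 : Fin 10) := Fin.val_injective (by rw [h]; rfl)
      subst hM
      rw [show (Finset.Iic (1 : Fin 10))ᶜ = ({2,3,4,5,6,7,8,9} : Finset (Fin 10)) from by decide,
        show Finset.Iic (1 : Fin 10) = ({0,1} : Finset (Fin 10)) from by decide] at hr
      rw [heval ({0,1} : Finset (Fin 10)) ({2,3,4,5,6,7,8,9} : Finset (Fin 10)) 1 2 1 4 20 hr
        (by decide) (hgval 1 2 (by decide) (by decide))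
        (hmassv _ 2 0 4 rfl rfl (by norm_num))
        (hmassv _ 8 2 20 rfl rfl (by norm_num))]
      rw [show |(4 : ℝ) - 12| = 8 from by rw [abs_of_nonpos] <;> norm_num,
        show |(20 : ℝ) - 12| = 8 from by rw [abs_of_nonneg] <;> norm_num, max_self]
      norm_num
    · -- M = 2
      have hM : M = (2 : Fin 10) := Fin.val_injective (by rw [h]; rfl)
      subst hM
      rw [show (Finset.Iic (2 : Fin 10))ᶜ = ({3,4,5,6,7,8,9} : Finset (Fin 10)) from by decide,
        show Finset.Iic (2 : Fin 10) = ({0,1,2} : Finset (Fin 10)) from by decide] at hr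
      rw [heval ({0,1,2} : Finset (Fin 10)) ({3,4,5,6,7,8,9} : Finset (Fin 10)) 2 3 1 6 18 hr
        (by decide) (hgval 2 3 (by decide) (by decide))
        (hmassv _ 3 0 6 rfl rfl (by norm_num))
        (hmassv _ 7 2 18 rfl rfl (by norm_num))]
      rw [show |(6 : ℝ) - 12| = 6 from by rw [abs_of_nonpos] <;> norm_num,
        show |(18 : ℝ) - 12| = 6 from by rw [abs_of_nonneg] <;> norm_num, max_self]
      norm_num
    · -- M = 3
      have hM : M = (3 : Fin 10) := Fin.val_injective (by rw [h]; rfl)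
      subst hM
      rw [show (Finset.Iic (3 : Fin 10))ᶜ = ({4,5,6,7,8,9} : Finset (Fin 10)) from by decide,
        show Finset.Iic (3 : Fin 10) = ({0,1,2,3} : Finset (Fin 10)) from by decide] at hr
      rw [heval ({0,1,2,3} : Finset (Fin 10)) ({4,5,6,7,8,9} : Finset (Fin 10)) 3 4 1 8 16 hr
        (by decide) (hgval 3 4 (by decide) (by decide))
        (hmassv _ 4 0 8 rfl rfl (by norm_num))
        (hmassv _ 6 2 16 rfl rfl (by norm_num))]
      rw [show |(8 : ℝ) - 12| = 4 from by rw [abs_of_nonpos] <;> norm_num,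
        show |(16 : ℝ) - 12| = 4 from by rw [abs_of_nonneg] <;> norm_num, max_self]
      norm_num
    · -- M = 4 : contradiction with hne
      have hM : M = (4 : Fin 10) := Fin.val_injective (by rw [h]; rfl)
      subst hM
      rw [show (Finset.Iic (4 : Fin 10))ᶜ = {5,6,7,8,9} from by decide,
        show Finset.Iic (4 : Fin 10) = {0,1,2,3,4} from by decide] at hr
      exact absurd (by rw [hr, rangeD2]) hne
    · -- M = 5
      have hM : M = (5 : Fin 10) := Fin.val_injective (by rw [h]; rfl)
      subst hM
      rw [show (Finset.Iic (5 : Fin 10))ᶜ = ({6,7,8,9} : Finset (Fin 10)) from by decide,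
        show Finset.Iic (5 : Fin 10) = ({0,1,2,3,4,5} : Finset (Fin 10)) from by decide] at hr
      rw [heval ({0,1,2,3,4,5} : Finset (Fin 10)) ({6,7,8,9} : Finset (Fin 10)) 5 6 1 16 8 hr
        (by decide) (hgval 5 6 (by decide) (by decide))
        (hmassv _ 6 2 16 rfl rfl (by norm_num))
        (hmassv _ 4 0 8 rfl rfl (by norm_num))]
      rw [show |(16 : ℝ) - 12| = 4 from by rw [abs_of_nonneg] <;> norm_num,
        show |(8 : ℝ) - 12| = 4 from by rw [abs_of_nonpos] <;> norm_num, max_self]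
      norm_num
    · -- M = 6
      have hM : M = (6 : Fin 10) := Fin.val_injective (by rw [h]; rfl)
      subst hM
      rw [show (Finset.Iic (6 : Fin 10))ᶜ = ({7,8,9} : Finset (Fin 10)) from by decide,
        show Finset.Iic (6 : Fin 10) = ({0,1,2,3,4,5,6} : Finset (Fin 10)) from by decide] at hr
      rw [heval ({0,1,2,3,4,5,6} : Finset (Fin 10)) ({7,8,9} : Finset (Fin 10)) 6 7 1 18 6 hr
        (by decide) (hgval 6 7 (by decide) (by decide))
        (hmassv _ 7 2 18 rfl rfl (by norm_num))
        (hmassv _ 3 0 6 rfl rfl (by norm_num))]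
      rw [show |(18 : ℝ) - 12| = 6 from by rw [abs_of_nonneg] <;> norm_num,
        show |(6 : ℝ) - 12| = 6 from by rw [abs_of_nonpos] <;> norm_num, max_self]
      norm_num
    · -- M = 7
      have hM : M = (7 : Fin 10) := Fin.val_injective (by rw [h]; rfl)
      subst hM
      rw [show (Finset.Iic (7 : Fin 10))ᶜ = ({8,9} : Finset (Fin 10)) from by decide,
        show Finset.Iic (7 : Fin 10) = ({0,1,2,3,4,5,6,7} : Finset (Fin 10)) from by decide] at hr
      rw [heval ({0,1,2,3,4,5,6,7} : Finset (Fin 10)) ({8,9} : Finset (Fin 10)) 7 8 1 20 4 hr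
        (by decide) (hgval 7 8 (by decide) (by decide))
        (hmassv _ 8 2 20 rfl rfl (by norm_num))
        (hmassv _ 2 0 4 rfl rfl (by norm_num))]
      rw [show |(20 : ℝ) - 12| = 8 from by rw [abs_of_nonneg] <;> norm_num,
        show |(4 : ℝ) - 12| = 8 from by rw [abs_of_nonpos] <;> norm_num, max_self]
      norm_num
    · -- M = 8
      have hM : M = (8 : Fin 10) := Fin.val_injective (by rw [h]; rfl)
      subst hM
      rw [show (Finset.Iic (8 : Fin 10))ᶜ = ({9} : Finset (Fin 10)) from by decide,
        show Finset.Iic (8 : Fin 10) = ({0,1,2,3,4,5,6,7,8} : Finset (Fin 10)) from by decide] at hr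
      rw [heval ({0,1,2,3,4,5,6,7,8} : Finset (Fin 10)) ({9} : Finset (Fin 10)) 8 9 1 22 2 hr
        (by decide) (hgval 8 9 (by decide) (by decide))
        (hmassv _ 9 2 22 rfl rfl (by norm_num))
        (hmassv _ 1 0 2 rfl rfl (by norm_num))]
      rw [show |(22 : ℝ) - 12| = 10 from by rw [abs_of_nonneg] <;> norm_num,
        show |(2 : ℝ) - 12| = 10 from by rw [abs_of_nonpos] <;> norm_num, max_self]
      norm_num
  -- minimality characterisation for 2-partitions
  have hiff2 : ∀ P : Partition pathGraph10 2,
      (∀ Q : Partition pathGraph10 2,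
        energyInf pathGraph10 f g (1 / 2) P ≤ energyInf pathGraph10 f g (1 / 2) Q) ↔
      Set.range P.part = rangeD2 := by
    intro P
    constructor
    · intro hmin
      by_contra hne
      have h1 := hE2' P hne
      have h2 := hmin D2
      rw [hE2 D2 hD2range] at h2
      linarith
    · intro hr Q'
      rw [hE2 P hr]
      by_cases hq : Set.range Q'.part = rangeD2
      · rw [hE2 Q' hq]
      · linarith [hE2' Q' hq]
  -- the partition C4
  let C4 : Partition pathGraph10 4 :=
    mkFour {0,1} {2,3} {4,5} {6,7,8,9}
      (by rw [Finset.disjoint_left]; decide) (by rw [Finset.disjoint_left]; decide)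
      (by rw [Finset.disjoint_left]; decide) (by rw [Finset.disjoint_left]; decide)
      (by rw [Finset.disjoint_left]; decide) (by rw [Finset.disjoint_left]; decide)
      (by decide)
      (connected_of_convex _ ⟨0, by decide⟩ (by decide))
      (connected_of_convex _ ⟨2, by decide⟩ (by decide))
      (connected_of_convex _ ⟨4, by decide⟩ (by decide))
      (connected_of_convex _ ⟨6, by decide⟩ (by decide))
  have hC4range : Set.range C4.part = rangeC4 := by
    rw [rangeC4]; exact range_mkFour _ _ _ _ _ _ _ _ _ _ _ _ _ _ _
  have hEC4 : ∀ Q : Partition pathGraph10 4, Set.range Q.part = rangeC4 →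
      energyInf pathGraph10 f g (1 / 2) Q = 5 / 2 := by
    intro Q hr
    rw [rangeC4] at hr
    have hsum : ∑ e ∈ ({s((1:Fin 10),2), s((3:Fin 10),4), s((5:Fin 10),6)} :
        Finset (Sym2 (Fin 10))), g e = 3 := by
      rw [Finset.sum_insert (by
          simp only [Finset.mem_insert, Finset.mem_singleton, Sym2.eq_iff]; decide),
        Finset.sum_insert (by simp only [Finset.mem_singleton, Sym2.eq_iff]; decide),
        Finset.sum_singleton,
        hgval 1 2 (by decide) (by decide), hgval 3 4 (by decide) (by decide),
        hgval 5 6 (by decide) (by decide)]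
      norm_num
    rw [energy_four_eval f g Q {0,1} {2,3} {4,5} {6,7,8,9}
      ({s((1:Fin 10),2), s((3:Fin 10),4), s((5:Fin 10),6)} : Finset (Sym2 (Fin 10))) hr
      (by
        intro x y
        simp only [Finset.mem_insert, Finset.mem_singleton, Sym2.eq_iff]
        revert x y
        decide), htot, hsum,
      hmassv ({0,1} : Finset (Fin 10)) 2 0 4 rfl rfl (by norm_num),
      hmassv ({2,3} : Finset (Fin 10)) 2 0 4 rfl rfl (by norm_num),
      hmassv ({4,5} : Finset (Fin 10)) 2 2 8 rfl rfl (by norm_num),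
      hmassv ({6,7,8,9} : Finset (Fin 10)) 4 0 8 rfl rfl (by norm_num)]
    rw [show |(4 : ℝ) - 24 / 4| = 2 from by rw [abs_of_nonpos] <;> norm_num,
      show |(8 : ℝ) - 24 / 4| = 2 from by rw [abs_of_nonneg] <;> norm_num,
      max_self, max_self, max_self]
    norm_num
  refine ⟨⟨⟨D2, hD2range⟩, hE2, hE2', hiff2⟩,
    ⟨fun Q P hP href => refining_bound f g hg₄₅ hg Q P hP href, ⟨C4, hC4range⟩, hEC4, ?_⟩⟩
  intro Q hQmin P hP href
  have h1 := refining_bound f g hg₄₅ hg Q P hP href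
  have h2 := hQmin C4
  rw [hEC4 C4 hC4range] at h2
  linarith

end Districting

namespace Districting

/-- STATEMENT 17 (Example for the `∞`-norm), with `λ = 1/2` and `σ_∞`:
(a) `D₂` is the unique minimal `2`-partition, with energy `2`, all other
`2`-partitions having energy at least `5/2`; (b) every `2`-refining of `D₂` has
energy at least `3` while `C₄` has energy `5/2`; hence no minimal `4`-partition
is a `2`-refining of `D₂`. -/
theorem path10_inf_norm_no_refining
    (f : Fin 10 → ℝ) (hf₄ : f 4 = 4) (hf₅ : f 5 = 4)
    (hf : ∀ v : Fin 10, v ≠ 4 → v ≠ 5 → f v = 2)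
    (g : Sym2 (Fin 10) → ℝ) (hg₄₅ : g s(4, 5) = 4)
    (hg : ∀ e ∈ pathGraph10.edgeSet, e ≠ s(4, 5) → g e = 1) :
    -- (a)
    ((∃ P : Partition pathGraph10 2, Set.range P.part = rangeD2) ∧
      (∀ P : Partition pathGraph10 2, Set.range P.part = rangeD2 →
        energyInf pathGraph10 f g (1 / 2) P = 2) ∧
      (∀ P : Partition pathGraph10 2, Set.range P.part ≠ rangeD2 →
        5 / 2 ≤ energyInf pathGraph10 f g (1 / 2) P) ∧
      (∀ P : Partition pathGraph10 2,
        (∀ Q : Partition pathGraph10 2,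
            energyInf pathGraph10 f g (1 / 2) P
              ≤ energyInf pathGraph10 f g (1 / 2) Q) ↔
          Set.range P.part = rangeD2)) ∧
    -- (b)
    ((∀ Q : Partition pathGraph10 4, ∀ P : Partition pathGraph10 2,
        Set.range P.part = rangeD2 → IsRefining 2 Q P →
          3 ≤ energyInf pathGraph10 f g (1 / 2) Q) ∧
      (∃ Q : Partition pathGraph10 4, Set.range Q.part = rangeC4) ∧
      (∀ Q : Partition pathGraph10 4, Set.range Q.part = rangeC4 →
        energyInf pathGraph10 f g (1 / 2) Q = 5 / 2) ∧
      (∀ Q : Partition pathGraph10 4,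
        (∀ R : Partition pathGraph10 4,
            energyInf pathGraph10 f g (1 / 2) Q
              ≤ energyInf pathGraph10 f g (1 / 2) R) →
          ∀ P : Partition pathGraph10 2, Set.range P.part = rangeD2 →
            ¬ IsRefining 2 Q P)) := by
  exact path10_inf_norm_no_refining' f hf₄ hf₅ hf g hg₄₅ hg

end Districting
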